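/- arXiv:1507.00369 — 5 statements merged into one kernel-verified Lean document; each statement's English description precedes it below -/
import Mathlib

section
/- Every natural number N can be written as the sum of three terms of the sequence (⌊n²/4⌋)_{n∈ℕ}, i.e., there exist natural numbers A, B, C with N = ⌊A²/4⌋ + ⌊B²/4⌋ + ⌊C²/4⌋. -/
/-!
Since `⌊x²/4⌋ = (x² - x² mod 4)/4` and squares are `0` or `1` mod 4, it suffices to write
`4N + 1` as a sum of three squares. For `n ≡ 1 (mod 4)` Dirichlet's theorem gives a prime
`q ≡ 2n - 1 (mod 4n)`; quadratic reciprocity makes `-n` a square mod `q`, and from a root one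
builds a positive definite integral ternary form of determinant `1` representing `n`.
By Hermite's reduction every value of such a form is a sum of three squares: its minimum `m`
satisfies `27 m³ ≤ 64`, so `m = 1`, and completing the square leaves a binary form of
determinant `1`, which reduces to `y² + z²`.
-/

open Matrix

lemma Int.exists_two_mul_abs_add_mul_le (b : ℤ) {a : ℤ} (ha : 0 < a) :
    ∃ k, 2 * |b + k * a| ≤ a := by
  refine ⟨-((2 * b + a) / (2 * a)), ?_⟩
  have h1 := Int.emod_nonneg (2 * b + a) (by omega : 2 * a ≠ 0)
  have h2 := Int.emod_lt_of_pos (2 * b + a) (by omega : 0 < 2 * a)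
  have h3 := Int.emod_add_mul_ediv (2 * b + a) (2 * a)
  have key : |2 * (b + -((2 * b + a) / (2 * a)) * a)| ≤ a :=
    abs_le.mpr ⟨by linarith, by linarith⟩
  rwa [abs_mul, abs_two] at key

namespace Matrix

section

variable {n R : Type*} [Fintype n] [DecidableEq n] [CommRing R]

/-- `A` and `B` are Gram matrices of the same quadratic form in two bases related by `SL(n, R)`. -/
def SLCongr (A B : Matrix n n R) : Prop :=
  ∃ P : SpecialLinearGroup n R, (P : Matrix n n R)ᵀ * A * P = B

omit [DecidableEq n] in
lemma dotProduct_transpose_mul_mul_mulVec (A P : Matrix n n R) (v : n → R) :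
    v ⬝ᵥ (Pᵀ * A * P) *ᵥ v = (P *ᵥ v) ⬝ᵥ A *ᵥ (P *ᵥ v) := by
  rw [← mulVec_mulVec, ← mulVec_mulVec, dotProduct_mulVec, vecMul_transpose, dotProduct_mulVec]

lemma SpecialLinearGroup.mulVec_ne_zero (P : SpecialLinearGroup n R) {v : n → R} (hv : v ≠ 0) :
    (P : Matrix n n R) *ᵥ v ≠ 0 :=
  ((mulVec_injective_of_isUnit ((isUnit_iff_isUnit_det _).mpr (by simp))).ne_iff'
    (mulVec_zero _)).mpr hv

namespace SLCongr

lemma trans {A B C : Matrix n n R} (hAB : SLCongr A B) (hBC : SLCongr B C) : SLCongr A C := by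
  obtain ⟨P, rfl⟩ := hAB
  obtain ⟨Q, rfl⟩ := hBC
  exact ⟨P * Q, by simp [Matrix.mul_assoc]⟩

lemma symm {A B : Matrix n n R} (h : SLCongr A B) : SLCongr B A := by
  obtain ⟨P, rfl⟩ := h
  have hP : (P : Matrix n n R) * ((P⁻¹ : SpecialLinearGroup n R) : Matrix n n R) = 1 := by
    rw [← SpecialLinearGroup.coe_mul, mul_inv_cancel, SpecialLinearGroup.coe_one]
  refine ⟨P⁻¹, ?_⟩
  rw [← Matrix.mul_assoc, ← Matrix.mul_assoc, ← transpose_mul, hP, transpose_one, Matrix.one_mul,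
    Matrix.mul_assoc, hP, Matrix.mul_one]

lemma det_eq {A B : Matrix n n R} (h : SLCongr A B) : B.det = A.det := by
  obtain ⟨P, rfl⟩ := h
  simp

lemma exists_dotProduct_mulVec_eq {A B : Matrix n n R} (h : SLCongr A B) (w : n → R) :
    ∃ v, (w ≠ 0 → v ≠ 0) ∧ w ⬝ᵥ B *ᵥ w = v ⬝ᵥ A *ᵥ v := by
  obtain ⟨P, rfl⟩ := h
  exact ⟨P *ᵥ w, P.mulVec_ne_zero, dotProduct_transpose_mul_mul_mulVec A P w⟩

lemma forall_ne_zero {A B : Matrix n n R} (h : SLCongr A B) {p : R → Prop}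
    (hA : ∀ v ≠ 0, p (v ⬝ᵥ A *ᵥ v)) : ∀ w ≠ 0, p (w ⬝ᵥ B *ᵥ w) := by
  intro w hw
  obtain ⟨v, hv, hwv⟩ := h.exists_dotProduct_mulVec_eq w
  exact hwv ▸ hA v (hv hw)

lemma posDef [PartialOrder R] [StarRing R] [TrivialStar R] {A B : Matrix n n R}
    (h : SLCongr A B) (hA : A.PosDef) : B.PosDef := by
  refine .of_dotProduct_mulVec_pos ?_ fun w hw => by
    simpa using h.forall_ne_zero (p := (0 < ·))
      (fun v hv => by simpa using hA.dotProduct_mulVec_pos hv) w hw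
  obtain ⟨P, rfl⟩ := h
  simpa [conjTranspose_eq_transpose_of_trivial] using
    isHermitian_conjTranspose_mul_mul (P : Matrix n n R) hA.1

end SLCongr

lemma exists_SLCongr_apply_eq_add_mul (B : Matrix n n R) {i j : n} (hij : i ≠ j) (c : R) :
    ∃ B', SLCongr B B' ∧ B' i j = B i j + c * B i i ∧ ∀ l ≠ j, B' i l = B i l := by
  have hT : (transvection i j c)ᵀ = transvection j i c := by
    simp [transvection, transpose_single]
  refine ⟨(transvection i j c)ᵀ * B * transvection i j c,
    ⟨⟨transvection i j c, det_transvection_of_ne i j hij c⟩, rfl⟩, ?_, fun l hl => ?_⟩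
  · rw [mul_transvection_apply_same, hT, transvection_mul_apply_of_ne _ _ _ _ hij,
      transvection_mul_apply_of_ne _ _ _ _ hij]
  · rw [mul_transvection_apply_of_ne _ _ _ _ hl, hT, transvection_mul_apply_of_ne _ _ _ _ hij]

end

lemma exists_SL_fin_two_mulVec_single_eq {R : Type*} [CommRing R] (v : Fin 2 → R)
    (hv : ∃ c, c ⬝ᵥ v = 1) :
    ∃ P : SpecialLinearGroup (Fin 2) R, (P : Matrix (Fin 2) (Fin 2) R) *ᵥ Pi.single 0 1 = v := by
  obtain ⟨c, hc⟩ := hv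
  rw [dotProduct, Fin.sum_univ_two] at hc
  refine ⟨⟨!![v 0, -c 1; v 1, c 0], ?_⟩, ?_⟩
  · rw [det_fin_two_of]; linear_combination hc
  · ext i; fin_cases i <;> simp

lemma exists_SL_fin_three_mulVec_single_eq {R : Type*} [CommRing R] [IsBezout R] [GCDMonoid R]
    (v : Fin 3 → R) (hv : ∃ c, c ⬝ᵥ v = 1) :
    ∃ P : SpecialLinearGroup (Fin 3) R, (P : Matrix (Fin 3) (Fin 3) R) *ᵥ Pi.single 0 1 = v := by
  obtain ⟨c, hc⟩ := hv
  rw [dotProduct, Fin.sum_univ_three] at hc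
  obtain ⟨y, z, hy, hz, hyz⟩ := extract_gcd (v 1) (v 2)
  set g := gcd (v 1) (v 2)
  obtain ⟨u, w, huw⟩ := (gcd_isUnit_iff_isRelPrime.mp hyz).isCoprime
  refine ⟨⟨!![v 0, -(c 1 * y + c 2 * z), 0; v 1, c 0 * y, -w; v 2, c 0 * z, u], ?_⟩, ?_⟩
  · simp [det_fin_three]
    rw [hy, hz] at hc ⊢
    linear_combination (c 0 * v 0 + (c 1 * y + c 2 * z) * g) * huw + hc
  · ext i; fin_cases i <;> simp

lemma PosDef.isSymm {n R : Type*} [Ring R] [PartialOrder R] [StarRing R] [TrivialStar R]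
    {A : Matrix n n R} (hA : A.PosDef) : A.IsSymm := by
  simpa [IsSymm, IsHermitian, conjTranspose_eq_transpose_of_trivial] using hA.isHermitian

section PosDef

variable {n : Type*} [Fintype n] {A : Matrix n n ℤ}

lemma PosDef.exists_forall_dotProduct_mulVec_le [Nonempty n] (hA : A.PosDef) :
    ∃ v ≠ 0, ∀ w ≠ 0, v ⬝ᵥ A *ᵥ v ≤ w ⬝ᵥ A *ᵥ w := by
  obtain ⟨_, ⟨v, hv, rfl⟩, hmin⟩ :=
    Int.exists_least_of_bdd (P := fun z => ∃ v ≠ 0, v ⬝ᵥ A *ᵥ v = z)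
      ⟨0, by rintro _ ⟨v, hv, rfl⟩; simpa using (hA.dotProduct_mulVec_pos hv).le⟩
      (by obtain ⟨v, hv⟩ := exists_ne (0 : n → ℤ); exact ⟨_, v, hv, rfl⟩)
  exact ⟨v, hv, fun w hw => hmin _ ⟨w, hw, rfl⟩⟩

/-- If all entries of `v` were divisible by `g`, dividing by `g` would shrink the value of the
form by the factor `g²`. -/
lemma PosDef.exists_dotProduct_eq_one (hA : A.PosDef) {v : n → ℤ} (hv : v ≠ 0)
    (hmin : ∀ w ≠ 0, v ⬝ᵥ A *ᵥ v ≤ w ⬝ᵥ A *ᵥ w) : ∃ c, c ⬝ᵥ v = 1 := by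
  obtain ⟨g, hg⟩ := Submodule.IsPrincipal.principal (Ideal.span (Set.range v))
  change Ideal.span (Set.range v) = Ideal.span {g} at hg
  have hdvd (i : n) : g ∣ v i := Ideal.mem_span_singleton.mp (hg ▸ Ideal.subset_span ⟨i, rfl⟩)
  choose w hw using hdvd
  have hvw : v = g • w := funext hw
  have hw0 : w ≠ 0 := by rintro rfl; exact hv (by simp [hvw])
  have hQ : v ⬝ᵥ A *ᵥ v = g ^ 2 * (w ⬝ᵥ A *ᵥ w) := by
    rw [hvw, mulVec_smul, smul_dotProduct, dotProduct_smul, smul_eq_mul, smul_eq_mul]; ring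
  have hpos : 0 < w ⬝ᵥ A *ᵥ w := by simpa using hA.dotProduct_mulVec_pos hw0
  have hg1 : g ^ 2 * (w ⬝ᵥ A *ᵥ w) ≤ 1 * (w ⬝ᵥ A *ᵥ w) := by linarith [hmin w hw0]
  have hunit : IsUnit g := by
    have hg0 : g ≠ 0 := by rintro rfl; exact hv (by simp [hvw])
    have := le_of_mul_le_mul_right hg1 hpos
    have : -1 ≤ g ∧ g ≤ 1 := ⟨by nlinarith, by nlinarith⟩
    rw [Int.isUnit_iff]
    omega
  obtain ⟨c, hc⟩ := Ideal.mem_span_range_iff_exists_fun.mp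
    (show (1 : ℤ) ∈ Ideal.span (Set.range v) by
      rw [hg, Ideal.span_singleton_eq_top.mpr hunit]; trivial)
  exact ⟨c, hc⟩

lemma PosDef.exists_SLCongr_forall_apply_le [DecidableEq n] (hA : A.PosDef) (i : n)
    (hcompl : ∀ v : n → ℤ, (∃ c, c ⬝ᵥ v = 1) →
      ∃ P : SpecialLinearGroup n ℤ, (P : Matrix n n ℤ) *ᵥ Pi.single i 1 = v) :
    ∃ B, SLCongr A B ∧ ∀ w ≠ 0, B i i ≤ w ⬝ᵥ B *ᵥ w := by
  have : Nonempty n := ⟨i⟩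
  obtain ⟨v, hv, hmin⟩ := hA.exists_forall_dotProduct_mulVec_le
  obtain ⟨P, hP⟩ := hcompl v (hA.exists_dotProduct_eq_one hv hmin)
  have hAB : SLCongr A ((P : Matrix n n ℤ)ᵀ * A * P) := ⟨P, rfl⟩
  have hii : ((P : Matrix n n ℤ)ᵀ * A * P) i i = v ⬝ᵥ A *ᵥ v := by
    rw [← hP, ← dotProduct_transpose_mul_mul_mulVec, mulVec_single_one, single_one_dotProduct]
    rfl
  exact ⟨_, hAB, hii ▸ hAB.forall_ne_zero hmin⟩

end PosDef

section FinTwo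

lemma dotProduct_mulVec_fin_two {R : Type*} [CommRing R] (A : Matrix (Fin 2) (Fin 2) R)
    (v : Fin 2 → R) :
    v ⬝ᵥ A *ᵥ v = A 0 0 * v 0 ^ 2 + (A 0 1 + A 1 0) * v 0 * v 1 + A 1 1 * v 1 ^ 2 := by
  simp [dotProduct, mulVec, Fin.sum_univ_two]; ring

variable {A : Matrix (Fin 2) (Fin 2) ℤ}

theorem PosDef.exists_SLCongr_reduced_fin_two (hA : A.PosDef) :
    ∃ B, SLCongr A B ∧ (∀ w ≠ 0, B 0 0 ≤ w ⬝ᵥ B *ᵥ w) ∧ 2 * |B 0 1| ≤ B 0 0 := by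
  obtain ⟨B, hAB, hmin⟩ := hA.exists_SLCongr_forall_apply_le 0 exists_SL_fin_two_mulVec_single_eq
  obtain ⟨k, hk⟩ := Int.exists_two_mul_abs_add_mul_le (B 0 1) (hAB.posDef hA).diag_pos
  obtain ⟨B', hBB', h01, h0⟩ := exists_SLCongr_apply_eq_add_mul B (i := 0) (j := 1) (by decide) k
  rw [← h0 0 (by decide)] at hk hmin
  refine ⟨B', hAB.trans hBB', hBB'.forall_ne_zero hmin, ?_⟩
  rwa [h01, ← h0 0 (by decide)]

lemma PosDef.three_mul_sq_le_four_mul_det_of_reduced (hA : A.PosDef)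
    (hmin : ∀ w ≠ 0, A 0 0 ≤ w ⬝ᵥ A *ᵥ w) (h01 : 2 * |A 0 1| ≤ A 0 0) :
    3 * A 0 0 ^ 2 ≤ 4 * A.det := by
  have h11 : A 0 0 ≤ A 1 1 := by
    simpa [dotProduct_mulVec_fin_two] using hmin (Pi.single 1 1) (by simp)
  have hsq : 4 * A 0 1 ^ 2 ≤ A 0 0 ^ 2 := by
    rw [← sq_abs]; nlinarith [abs_nonneg (A 0 1)]
  rw [det_fin_two, hA.isSymm.apply 0 1]
  nlinarith [hA.diag_pos (i := 0)]

theorem PosDef.exists_ne_zero_three_mul_sq_le_four_mul_det (hA : A.PosDef) :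
    ∃ v ≠ 0, 3 * (v ⬝ᵥ A *ᵥ v) ^ 2 ≤ 4 * A.det := by
  obtain ⟨B, hAB, hmin, h01⟩ := hA.exists_SLCongr_reduced_fin_two
  obtain ⟨v, hv, hBv⟩ := hAB.exists_dotProduct_mulVec_eq (Pi.single 0 1)
  refine ⟨v, hv (by simp), ?_⟩
  rw [← hBv, ← hAB.det_eq]
  simpa using (hAB.posDef hA).three_mul_sq_le_four_mul_det_of_reduced hmin h01

theorem PosDef.exists_sq_add_sq_of_det_eq_one (hA : A.PosDef) (hdet : A.det = 1)
    (v : Fin 2 → ℤ) : ∃ x y, v ⬝ᵥ A *ᵥ v = x ^ 2 + y ^ 2 := by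
  obtain ⟨B, hAB, hmin, h01⟩ := hA.exists_SLCongr_reduced_fin_two
  have hB := hAB.posDef hA
  have h3 := hB.three_mul_sq_le_four_mul_det_of_reduced hmin h01
  rw [hAB.det_eq, hdet] at h3
  have h00 : B 0 0 = 1 := by nlinarith [hB.diag_pos (i := 0)]
  have h01' : B 0 1 = 0 := by
    rw [h00] at h01; rw [← abs_eq_zero]; linarith [abs_nonneg (B 0 1)]
  have h11 : B 1 1 = 1 := by
    have := hAB.det_eq
    rw [det_fin_two, h00, h01', hdet] at this; linarith
  obtain ⟨w, -, hvw⟩ := hAB.symm.exists_dotProduct_mulVec_eq v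
  refine ⟨w 0, w 1, ?_⟩
  rw [hvw, dotProduct_mulVec_fin_two, h00, h01', hB.isSymm.apply, h01', h11]
  ring

end FinTwo

section FinThree

variable {R : Type*} [CommRing R]

lemma dotProduct_mulVec_fin_three (A : Matrix (Fin 3) (Fin 3) R) (v : Fin 3 → R) :
    v ⬝ᵥ A *ᵥ v = A 0 0 * v 0 ^ 2 + A 1 1 * v 1 ^ 2 + A 2 2 * v 2 ^ 2 + (A 0 1 + A 1 0) * v 0 * v 1
      + (A 0 2 + A 2 0) * v 0 * v 2 + (A 1 2 + A 2 1) * v 1 * v 2 := by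
  simp [dotProduct, mulVec, Fin.sum_univ_three]; ring

/-- `A 0 0` times the Schur complement of `A 0 0`: the binary form left over after completing
the square in the first variable. -/
def scaledSchurComplement (A : Matrix (Fin 3) (Fin 3) R) : Matrix (Fin 2) (Fin 2) R :=
  !![A 0 0 * A 1 1 - A 0 1 ^ 2, A 0 0 * A 1 2 - A 0 1 * A 0 2;
     A 0 0 * A 1 2 - A 0 1 * A 0 2, A 0 0 * A 2 2 - A 0 2 ^ 2]

lemma IsSymm.mul_dotProduct_mulVec_eq_sq_add {A : Matrix (Fin 3) (Fin 3) R} (hA : A.IsSymm) (x : R)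
    (w : Fin 2 → R) :
    A 0 0 * (![x, w 0, w 1] ⬝ᵥ A *ᵥ ![x, w 0, w 1]) =
      (A 0 0 * x + A 0 1 * w 0 + A 0 2 * w 1) ^ 2 + w ⬝ᵥ A.scaledSchurComplement *ᵥ w := by
  rw [dotProduct_mulVec_fin_three, dotProduct_mulVec_fin_two, hA.apply 0 1, hA.apply 0 2,
    hA.apply 1 2]
  simp [scaledSchurComplement]; ring

lemma IsSymm.det_scaledSchurComplement {A : Matrix (Fin 3) (Fin 3) R} (hA : A.IsSymm) :
    A.scaledSchurComplement.det = A 0 0 * A.det := by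
  rw [det_fin_three, hA.apply 0 1, hA.apply 0 2, hA.apply 1 2, scaledSchurComplement,
    det_fin_two_of]
  ring

variable {A : Matrix (Fin 3) (Fin 3) ℤ}

lemma PosDef.three_mul_sq_le_four_mul_scaledSchurComplement (hA : A.PosDef)
    (hmin : ∀ w ≠ 0, A 0 0 ≤ w ⬝ᵥ A *ᵥ w) {w : Fin 2 → ℤ} (hw : w ≠ 0) :
    3 * A 0 0 ^ 2 ≤ 4 * (w ⬝ᵥ A.scaledSchurComplement *ᵥ w) := by
  have hm : 0 < A 0 0 := hA.diag_pos
  obtain ⟨k, hk⟩ := Int.exists_two_mul_abs_add_mul_le (A 0 1 * w 0 + A 0 2 * w 1) hm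
  have hv : ![k, w 0, w 1] ≠ 0 := by
    intro h
    apply hw
    ext i; fin_cases i
    · simpa using congrFun h 1
    · simpa using congrFun h 2
  have h1 := mul_le_mul_of_nonneg_left (hmin _ hv) hm.le
  have h2 : 4 * (A 0 1 * w 0 + A 0 2 * w 1 + k * A 0 0) ^ 2 ≤ A 0 0 ^ 2 := by
    rw [← sq_abs]; nlinarith [abs_nonneg (A 0 1 * w 0 + A 0 2 * w 1 + k * A 0 0)]
  nlinarith [hA.isSymm.mul_dotProduct_mulVec_eq_sq_add k w]

lemma PosDef.posDef_scaledSchurComplement (hA : A.PosDef)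
    (hmin : ∀ w ≠ 0, A 0 0 ≤ w ⬝ᵥ A *ᵥ w) : A.scaledSchurComplement.PosDef := by
  refine .of_dotProduct_mulVec_pos ?_ fun w hw => ?_
  · ext i j; fin_cases i <;> fin_cases j <;> rfl
  · have := hA.three_mul_sq_le_four_mul_scaledSchurComplement hmin hw
    simpa using (by nlinarith [hA.diag_pos (i := 0)] : 0 < w ⬝ᵥ A.scaledSchurComplement *ᵥ w)

/-- The minimum `m` of a unimodular positive definite ternary form is `1`: the binary form
`scaledSchurComplement` has determinant `m` and values at least `3m²/4`, while by Hermite's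
bound it takes a value at most `(4m/3)^(1/2)`. -/
lemma PosDef.apply_zero_zero_eq_one (hA : A.PosDef) (hdet : A.det = 1)
    (hmin : ∀ w ≠ 0, A 0 0 ≤ w ⬝ᵥ A *ᵥ w) : A 0 0 = 1 := by
  have hm : 0 < A 0 0 := hA.diag_pos
  obtain ⟨w, hw, hQ⟩ :=
    (hA.posDef_scaledSchurComplement hmin).exists_ne_zero_three_mul_sq_le_four_mul_det
  have hQm := hA.three_mul_sq_le_four_mul_scaledSchurComplement hmin hw
  rw [hA.isSymm.det_scaledSchurComplement, hdet, mul_one] at hQ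
  by_contra hm1
  have hm2 : 2 ≤ A 0 0 := by omega
  have h3 : 3 * A 0 0 ≤ 2 * (w ⬝ᵥ A.scaledSchurComplement *ᵥ w) := by nlinarith
  nlinarith

theorem PosDef.exists_sum_three_sq_of_det_eq_one (hA : A.PosDef) (hdet : A.det = 1)
    (v : Fin 3 → ℤ) : ∃ x y z, v ⬝ᵥ A *ᵥ v = x ^ 2 + y ^ 2 + z ^ 2 := by
  obtain ⟨B, hAB, hmin⟩ := hA.exists_SLCongr_forall_apply_le 0 exists_SL_fin_three_mulVec_single_eq
  have hB := hAB.posDef hA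
  have hdetB : B.det = 1 := hAB.det_eq.trans hdet
  have h00 := hB.apply_zero_zero_eq_one hdetB hmin
  have hG := hB.posDef_scaledSchurComplement hmin
  have hdetG : B.scaledSchurComplement.det = 1 := by
    rw [hB.isSymm.det_scaledSchurComplement, h00, hdetB, mul_one]
  obtain ⟨w, -, hvw⟩ := hAB.symm.exists_dotProduct_mulVec_eq v
  obtain ⟨y, z, hyz⟩ := hG.exists_sq_add_sq_of_det_eq_one hdetG ![w 1, w 2]
  refine ⟨w 0 + B 0 1 * w 1 + B 0 2 * w 2, y, z, ?_⟩
  have hw : ![w 0, ![w 1, w 2] 0, ![w 1, w 2] 1] = w := by ext i; fin_cases i <;> rfl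
  have := hB.isSymm.mul_dotProduct_mulVec_eq_sq_add (w 0) ![w 1, w 2]
  rw [hw, h00, one_mul, hyz] at this
  simpa [hvw, add_assoc] using this

end FinThree

end Matrix

lemma Nat.exists_prime_mod_four_eq_one_modEq_neg_one {n : ℕ} (hn : n % 4 = 1) :
    ∃ q : ℕ, q.Prime ∧ q % 4 = 1 ∧ (q : ℤ) ≡ -1 [ZMOD n] := by
  obtain ⟨q, -, hq, hqn⟩ := Nat.forall_exists_prime_gt_and_zmodEq 0 (q := 4 * n)
    (a := 2 * n - 1) (by omega) ⟨-(2 * n + 1), n, by push_cast; ring⟩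
  push_cast at hqn
  refine ⟨q, hq, ?_, ?_⟩
  · have := (hqn.of_mul_right n).eq
    omega
  · exact (hqn.of_mul_left 4).trans (Int.modEq_iff_dvd.mpr ⟨-2, by ring⟩)

open scoped NumberTheorySymbols in
lemma ZMod.exists_dvd_mul_sq_add_one {n q : ℕ} [Fact q.Prime] (hn : n % 4 = 1) (hq : q % 4 = 1)
    (hqn : (q : ℤ) ≡ -1 [ZMOD n]) : ∃ r : ℤ, (q : ℤ) ∣ n * r ^ 2 + 1 := by
  have hqodd : Odd q := Nat.odd_iff.mpr (by omega)
  have hnq : n ∣ q + 1 := by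
    exact_mod_cast (by simpa using Int.modEq_iff_dvd.mp hqn.symm : (n : ℤ) ∣ q + 1)
  have hn0 : (n : ZMod q) ≠ 0 := by
    rw [Ne, ZMod.natCast_eq_zero_iff]
    exact fun h => (Fact.out : q.Prime).not_dvd_one ((Nat.dvd_add_right dvd_rfl).mp (h.trans hnq))
  have hJ : J(-n | q) = 1 := by
    rw [neg_eq_neg_one_mul, jacobiSym.mul_left, jacobiSym.at_neg_one hqodd,
      ZMod.χ₄_nat_one_mod_four hq, jacobiSym.quadratic_reciprocity_one_mod_four hn hqodd,
      jacobiSym.mod_left' hqn, jacobiSym.at_neg_one (Nat.odd_iff.mpr (by omega)),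
      ZMod.χ₄_nat_one_mod_four hn, one_mul]
  obtain ⟨s, hs⟩ := (legendreSym.eq_one_iff q (a := -n) (by simpa using hn0)).mp
    (by rwa [jacobiSym.legendreSym.to_jacobiSym])
  refine ⟨((s / n : ZMod q).cast : ℤ), (ZMod.intCast_zmod_eq_zero_iff_dvd _ q).mp ?_⟩
  push_cast at hs ⊢
  field_simp
  linear_combination -hs

lemma Matrix.posDef_of_add_one_eq_mul {q n k r c : ℤ} (hq : 0 < q) (hn : 0 < n)
    (hk : q + 1 = n * k) (hc : n * r ^ 2 + 1 = q * c) :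
    (!![n, 1, 0; 1, k, r; 0, r, c] : Matrix (Fin 3) (Fin 3) ℤ).PosDef := by
  refine .of_dotProduct_mulVec_pos ?_ fun v hv => ?_
  · ext i j; fin_cases i <;> fin_cases j <;> rfl
  have hid : q * n * (v ⬝ᵥ !![n, 1, 0; 1, k, r; 0, r, c] *ᵥ v)
      = q * (n * v 0 + v 1) ^ 2 + (q * v 1 + n * r * v 2) ^ 2 + n * v 2 ^ 2 := by
    rw [dotProduct_mulVec_fin_three]
    simp only [of_apply, cons_val', cons_val_zero, cons_val_one, cons_val_two, empty_val',
      cons_val_fin_one, head_cons, tail_cons, head_fin_const]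
    linear_combination (-q * v 1 ^ 2) * hk + (-n * v 2 ^ 2) * hc
  rw [star_trivial]
  by_contra hle
  have h1 : 0 ≤ q * (n * v 0 + v 1) ^ 2 := by positivity
  have h2 : 0 ≤ (q * v 1 + n * r * v 2) ^ 2 := by positivity
  have h3 : 0 ≤ n * v 2 ^ 2 := by positivity
  have hsum : q * (n * v 0 + v 1) ^ 2 + (q * v 1 + n * r * v 2) ^ 2 + n * v 2 ^ 2 ≤ 0 := by
    rw [← hid]; exact mul_nonpos_of_nonneg_of_nonpos (by positivity) (not_lt.mp hle)
  have hv2 : v 2 = 0 := by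
    simpa [hn.ne'] using (show n * v 2 ^ 2 = 0 by linarith)
  have hv1 : v 1 = 0 := by
    simpa [hv2, hq.ne'] using (show (q * v 1 + n * r * v 2) ^ 2 = 0 by linarith)
  have hv0 : v 0 = 0 := by
    simpa [hv1, hq.ne', hn.ne'] using (show q * (n * v 0 + v 1) ^ 2 = 0 by linarith)
  exact hv (by ext i; fin_cases i <;> assumption)

theorem Nat.sum_three_squares_of_mod_four_eq_one {n : ℕ} (hn : n % 4 = 1) :
    ∃ a b c : ℕ, a ^ 2 + b ^ 2 + c ^ 2 = n := by
  obtain ⟨q, hq, hq4, hqn⟩ := Nat.exists_prime_mod_four_eq_one_modEq_neg_one hn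
  have := Fact.mk hq
  obtain ⟨r, c, hc⟩ := ZMod.exists_dvd_mul_sq_add_one hn hq4 hqn
  obtain ⟨k, hk⟩ : (n : ℤ) ∣ q + 1 := by simpa using Int.modEq_iff_dvd.mp hqn.symm
  have hA := Matrix.posDef_of_add_one_eq_mul (by exact_mod_cast hq.pos) (by omega) hk hc
  have hdet : (!![(n : ℤ), 1, 0; 1, k, r; 0, r, c]).det = 1 := by
    simp [det_fin_three]
    linear_combination (-c) * hk - hc
  obtain ⟨x, y, z, h⟩ := hA.exists_sum_three_sq_of_det_eq_one hdet (Pi.single 0 1)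
  refine ⟨x.natAbs, y.natAbs, z.natAbs, ?_⟩
  zify
  simpa [mulVec_single_one, single_one_dotProduct, sq_abs] using h.symm

theorem stmt_1 (N : ℕ) :
    ∃ A B C : ℕ, N = A ^ 2 / 4 + B ^ 2 / 4 + C ^ 2 / 4 := by
  obtain ⟨A, B, C, h⟩ := Nat.sum_three_squares_of_mod_four_eq_one (n := 4 * N + 1) (by omega)
  have sq_mod_four (x : ℕ) : x ^ 2 % 4 ≤ 1 := by
    rcases Nat.even_or_odd x with ⟨k, rfl⟩ | ⟨k, rfl⟩ <;> ring_nf <;> omega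
  have := sq_mod_four A
  have := sq_mod_four B
  have := sq_mod_four C
  exact ⟨A, B, C, by omega⟩
end

section
/- Every natural number N can be written as the sum of three terms of the sequence (⌊n²/8⌋)_{n∈ℕ}, i.e., there exist natural numbers A, B, C with N = ⌊A²/8⌋ + ⌊B²/8⌋ + ⌊C²/8⌋. -/
/-!
Squares are `0`, `1` or `4` mod `8`, so `A² + B² + C² = 8N + 6` forces the residues `1, 1, 4` and
then `⌊A²/8⌋ + ⌊B²/8⌋ + ⌊C²/8⌋ = N`. It remains to write `2m`, `m = 4N + 3`, as a sum of three
squares, which is the classical argument of Dirichlet: choose a prime `p` with `p + 1 = 2mD`,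
`D ≡ 1 mod 4`; reciprocity makes `-D` a square mod `p`, say `b² + D = pc`, and the positive definite
ternary form with Gram matrix `[[p, b, 0], [b, c, 1], [0, 1, 2m]]` has determinant `1` and
represents `2m`. Such a form only takes sums of three squares: by Hermite's bound `3m² ≤ 4D` for
binary forms it represents a value in `(0, a)` at a primitive vector whenever its leading
coefficient `a` is at least `2`, so a change of basis lowers `a` until `a = 1`, where completing
the square leaves a binary form of determinant `1`.
-/

theorem exists_four_mul_sq_sub_mul_le {a : ℤ} (ha : 0 < a) (b : ℤ) :
    ∃ q, 4 * (b - a * q) ^ 2 ≤ a ^ 2 := by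
  have h0 := Int.emod_nonneg b ha.ne'
  have h1 := Int.emod_lt_of_pos b ha
  have hb := Int.mul_ediv_add_emod b a
  by_cases h : 2 * (b % a) ≤ a
  · exact ⟨b / a, by nlinarith⟩
  · exact ⟨b / a + 1, by nlinarith⟩

def binaryForm (a b c x y : ℤ) : ℤ := a * x ^ 2 + 2 * b * x * y + c * y ^ 2

theorem binaryForm_shift (a b c q x y : ℤ) :
    binaryForm a b c x y =
      binaryForm (c - 2 * b * q + a * q ^ 2) (b - a * q) a y (x + q * y) := by
  unfold binaryForm; ring

theorem binaryForm_eq_sq_add_sq {a b c : ℤ} (ha : 0 < a) (hdet : a * c - b ^ 2 = 1) (x y : ℤ) :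
    ∃ u v, binaryForm a b c x y = u ^ 2 + v ^ 2 := by
  rcases (show a = 1 ∨ 2 ≤ a by omega) with rfl | ha2
  · exact ⟨x + b * y, y, by unfold binaryForm; linear_combination y ^ 2 * hdet⟩
  obtain ⟨q, hq⟩ := exists_four_mul_sq_sub_mul_le ha b
  have hdet' : (c - 2 * b * q + a * q ^ 2) * a - (b - a * q) ^ 2 = 1 := by
    linear_combination hdet
  have hc' : 0 < c - 2 * b * q + a * q ^ 2 := by nlinarith
  have hlt : c - 2 * b * q + a * q ^ 2 < a := by nlinarith
  rw [binaryForm_shift a b c q]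
  exact binaryForm_eq_sq_add_sq hc' hdet' y (x + q * y)
termination_by a.toNat
decreasing_by omega

theorem exists_isCoprime_binaryForm_pos_le {a b c : ℤ} (ha : 0 < a) (hD : 0 < a * c - b ^ 2) :
    ∃ x y, IsCoprime x y ∧ 0 < binaryForm a b c x y ∧
      3 * binaryForm a b c x y ^ 2 ≤ 4 * (a * c - b ^ 2) := by
  obtain ⟨q, hq⟩ := exists_four_mul_sq_sub_mul_le ha b
  have hdet' : (c - 2 * b * q + a * q ^ 2) * a - (b - a * q) ^ 2 = a * c - b ^ 2 := by ring
  have hc' : 0 < c - 2 * b * q + a * q ^ 2 := by nlinarith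
  by_cases hlt : c - 2 * b * q + a * q ^ 2 < a
  · obtain ⟨x, y, hxy, hpos, hle⟩ := exists_isCoprime_binaryForm_pos_le hc' (hdet' ▸ hD)
    refine ⟨y - q * x, x, IsCoprime.sub_mul_right_left_iff.mpr hxy.symm, ?_⟩
    rw [binaryForm_shift a b c q, sub_add_cancel, ← hdet']
    exact ⟨hpos, hle⟩
  · -- the shifted form is reduced, so `a² ≤ a c' = D + (b - a q)² ≤ D + a² / 4`
    refine ⟨1, 0, isCoprime_one_left, ?_⟩
    unfold binaryForm
    constructor <;> nlinarith
termination_by a.toNat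
decreasing_by omega

/-- The form with Gram matrix `[[a, d, e], [d, b, g], [e, g, c]]`. -/
def ternaryForm (a b c d e g x y z : ℤ) : ℤ :=
  a * x ^ 2 + b * y ^ 2 + c * z ^ 2 + 2 * d * x * y + 2 * e * x * z + 2 * g * y * z

def ternaryPolar (a b c d e g x y z x' y' z' : ℤ) : ℤ :=
  a * x * x' + b * y * y' + c * z * z' + d * (x * y' + y * x') + e * (x * z' + z * x') +
    g * (y * z' + z * y')

def ternaryDet (a b c d e g : ℤ) : ℤ :=
  a * b * c + 2 * d * e * g - a * g ^ 2 - b * e ^ 2 - c * d ^ 2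

def TernaryPosDef (a b c d e g : ℤ) : Prop :=
  ∀ x y z, (x ≠ 0 ∨ y ≠ 0 ∨ z ≠ 0) → 0 < ternaryForm a b c d e g x y z

theorem mul_ternaryForm (a b c d e g x y z : ℤ) :
    a * ternaryForm a b c d e g x y z =
      (a * x + d * y + e * z) ^ 2 +
        binaryForm (a * b - d ^ 2) (a * g - d * e) (a * c - e ^ 2) y z := by
  unfold ternaryForm binaryForm; ring

theorem mul_ternaryDet (a b c d e g : ℤ) :
    a * ternaryDet a b c d e g = (a * b - d ^ 2) * (a * c - e ^ 2) - (a * g - d * e) ^ 2 := by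
  unfold ternaryDet; ring

theorem ternaryForm_subst (a b c d e g p₁ p₂ p₃ q₁ q₂ q₃ r₁ r₂ r₃ x y z : ℤ) :
    ternaryForm a b c d e g (p₁ * x + q₁ * y + r₁ * z) (p₂ * x + q₂ * y + r₂ * z)
      (p₃ * x + q₃ * y + r₃ * z) =
    ternaryForm (ternaryForm a b c d e g p₁ p₂ p₃) (ternaryForm a b c d e g q₁ q₂ q₃)
      (ternaryForm a b c d e g r₁ r₂ r₃) (ternaryPolar a b c d e g p₁ p₂ p₃ q₁ q₂ q₃)
      (ternaryPolar a b c d e g p₁ p₂ p₃ r₁ r₂ r₃) (ternaryPolar a b c d e g q₁ q₂ q₃ r₁ r₂ r₃)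
      x y z := by
  unfold ternaryForm ternaryPolar; ring

theorem ternaryDet_subst (a b c d e g p₁ p₂ p₃ q₁ q₂ q₃ r₁ r₂ r₃ : ℤ) :
    ternaryDet (ternaryForm a b c d e g p₁ p₂ p₃) (ternaryForm a b c d e g q₁ q₂ q₃)
      (ternaryForm a b c d e g r₁ r₂ r₃) (ternaryPolar a b c d e g p₁ p₂ p₃ q₁ q₂ q₃)
      (ternaryPolar a b c d e g p₁ p₂ p₃ r₁ r₂ r₃) (ternaryPolar a b c d e g q₁ q₂ q₃ r₁ r₂ r₃) =
    ternaryDet a b c d e g *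
      (p₁ * (q₂ * r₃ - q₃ * r₂) - q₁ * (p₂ * r₃ - p₃ * r₂) + r₁ * (p₂ * q₃ - p₃ * q₂)) ^ 2 := by
  unfold ternaryForm ternaryPolar ternaryDet; ring

theorem exists_ternaryForm_pos_lt {a b c d e g : ℤ} (hpos : TernaryPosDef a b c d e g)
    (hdet : ternaryDet a b c d e g = 1) (ha : 2 ≤ a) :
    ∃ x y z, IsCoprime y z ∧ 0 < ternaryForm a b c d e g x y z ∧
      ternaryForm a b c d e g x y z < a := by
  have hA : 0 < a * b - d ^ 2 := by
    have h := mul_ternaryForm a b c d e g (-d) a 0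
    have := hpos (-d) a 0 (by omega)
    unfold binaryForm at h
    nlinarith
  have hAdet := mul_ternaryDet a b c d e g
  rw [hdet, mul_one] at hAdet
  obtain ⟨y, z, hyz, hm, hmle⟩ :=
    exists_isCoprime_binaryForm_pos_le (b := a * g - d * e) (c := a * c - e ^ 2) hA (by omega)
  rw [← hAdet] at hmle
  have hma : binaryForm (a * b - d ^ 2) (a * g - d * e) (a * c - e ^ 2) y z ≤ a := by nlinarith
  obtain ⟨q, hq⟩ := exists_four_mul_sq_sub_mul_le (a := a) (by omega) (d * y + e * z)
  have hval := mul_ternaryForm a b c d e g (-q) y z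
  rw [show a * -q + d * y + e * z = d * y + e * z - a * q by ring] at hval
  -- `a f = s² + m` with `4 s² ≤ a²` and `0 < m ≤ a`, so `0 < 4 a f ≤ a² + 4 a < 4 a²`
  refine ⟨-q, y, z, hyz, by nlinarith, lt_of_mul_lt_mul_left (a := a) ?_ (by omega)⟩
  nlinarith

theorem exists_equiv_ternaryForm_fst_eq {a b c d e g x₀ y₀ z₀ : ℤ}
    (hpos : TernaryPosDef a b c d e g) (hyz : IsCoprime y₀ z₀) :
    ∃ a' b' c' d' e' g', a' = ternaryForm a b c d e g x₀ y₀ z₀ ∧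
      ternaryDet a' b' c' d' e' g' = ternaryDet a b c d e g ∧ TernaryPosDef a' b' c' d' e' g' ∧
      ∀ x y z, ∃ X Y Z, ternaryForm a b c d e g x y z = ternaryForm a' b' c' d' e' g' X Y Z := by
  obtain ⟨u, v, huv⟩ := hyz
  -- new basis `(x₀, y₀, z₀), (0, -v, u), (1, 0, 0)`, of determinant `u y₀ + v z₀ = 1`
  refine ⟨_, ternaryForm a b c d e g 0 (-v) u, ternaryForm a b c d e g 1 0 0,
    ternaryPolar a b c d e g x₀ y₀ z₀ 0 (-v) u, ternaryPolar a b c d e g x₀ y₀ z₀ 1 0 0,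
    ternaryPolar a b c d e g 0 (-v) u 1 0 0, rfl, ?det, ?pos, ?rep⟩
  case det =>
    rw [ternaryDet_subst]
    linear_combination ternaryDet a b c d e g * (u * y₀ + v * z₀ + 1) * huv
  case pos =>
    intro X Y Z hXYZ
    rw [← ternaryForm_subst]
    refine hpos _ _ _ ?_
    by_contra! ⟨hx, hy, hz⟩
    have hX : X = 0 := by linear_combination u * hy + v * hz - X * huv
    have hY : Y = 0 := by linear_combination y₀ * hz - z₀ * hy - Y * huv
    have hZ : Z = 0 := by linear_combination hx - x₀ * hX
    simp [hX, hY, hZ] at hXYZ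
  case rep =>
    intro x y z
    refine ⟨u * y + v * z, y₀ * z - z₀ * y, x - x₀ * (u * y + v * z), ?_⟩
    rw [← ternaryForm_subst a b c d e g x₀ y₀ z₀ 0 (-v) u 1 0 0]
    congr 1
    · ring
    · linear_combination -(y * huv)
    · linear_combination -(z * huv)

theorem ternaryForm_eq_sum_three_sq {a b c d e g : ℤ} (hpos : TernaryPosDef a b c d e g)
    (hdet : ternaryDet a b c d e g = 1) (x y z : ℤ) :
    ∃ u v w, ternaryForm a b c d e g x y z = u ^ 2 + v ^ 2 + w ^ 2 := by
  have ha : 0 < a := by simpa [ternaryForm] using hpos 1 0 0 (by simp)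
  rcases (show a = 1 ∨ 2 ≤ a by omega) with rfl | ha2
  · have hA : 0 < b - d ^ 2 := by
      have h := mul_ternaryForm 1 b c d e g (-d) 1 0
      have := hpos (-d) 1 0 (by omega)
      unfold binaryForm at h
      nlinarith
    have hAdet := mul_ternaryDet 1 b c d e g
    obtain ⟨u, v, huv⟩ := binaryForm_eq_sq_add_sq (b := g - d * e) (c := c - e ^ 2) hA
      (by linear_combination hdet - hAdet) y z
    refine ⟨x + d * y + e * z, u, v, ?_⟩
    have h := mul_ternaryForm 1 b c d e g x y z
    simp only [one_mul] at h
    rw [h, huv]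
    ring
  obtain ⟨x₀, y₀, z₀, hyz, -, hlt⟩ := exists_ternaryForm_pos_lt hpos hdet ha2
  obtain ⟨a', b', c', d', e', g', rfl, hdet', hpos', hrep⟩ :=
    exists_equiv_ternaryForm_fst_eq (x₀ := x₀) hpos hyz
  obtain ⟨X, Y, Z, hXYZ⟩ := hrep x y z
  rw [hXYZ]
  exact ternaryForm_eq_sum_three_sq hpos' (hdet'.trans hdet) X Y Z
termination_by a.toNat
decreasing_by omega

theorem exists_prime_add_one_eq {m : ℕ} (hm : m % 4 = 3) :
    ∃ p k : ℕ, p.Prime ∧ p + 1 = 2 * m * (4 * k + 1) := by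
  obtain ⟨j, rfl⟩ : ∃ j, m = 4 * j + 3 := ⟨m / 4, by omega⟩
  have hcop : (8 * j + 5).Coprime (8 * (4 * j + 3)) :=
    Nat.isCoprime_iff_coprime.mp ⟨8 * j + 5, -(2 * j + 1), by push_cast; ring⟩
  obtain ⟨p, hpm, hp, hmod⟩ := Nat.forall_exists_prime_gt_and_modEq (8 * j + 5) (by omega) hcop
  obtain ⟨k, hk⟩ := (Nat.modEq_iff_dvd' hpm.le).mp hmod.symm
  refine ⟨p, k, hp, ?_⟩
  rw [show p = 8 * (4 * j + 3) * k + (8 * j + 5) by omega]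
  ring

open NumberTheorySymbols in
theorem exists_dvd_sq_add {p D : ℕ} [hp : Fact p.Prime] (hp4 : p % 4 = 1) (hD : D % 4 = 1)
    (hDp : D ∣ p + 1) : ∃ b : ℤ, (p : ℤ) ∣ b ^ 2 + D := by
  have hpodd : Odd p := Nat.odd_iff.mpr (by omega)
  have hDodd : Odd D := Nat.odd_iff.mpr (by omega)
  have hJ : J(-D | p) = 1 := by
    have hpD : (p : ℤ) ≡ -1 [ZMOD D] := by
      have h : (D : ℤ) ∣ p + 1 := by exact_mod_cast hDp
      exact Int.modEq_iff_dvd.mpr (by rw [show (-1 - p : ℤ) = -(p + 1) by ring]; exact h.neg_right)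
    rw [show (-D : ℤ) = -1 * D by ring, jacobiSym.mul_left, jacobiSym.at_neg_one hpodd,
      ZMod.χ₄_nat_one_mod_four hp4, jacobiSym.quadratic_reciprocity_one_mod_four' hDodd hp4,
      jacobiSym.mod_left' hpD, jacobiSym.at_neg_one hDodd, ZMod.χ₄_nat_one_mod_four hD, one_mul]
  have hD0 : ((-D : ℤ) : ZMod p) ≠ 0 := by
    have hpD : ¬ p ∣ D := fun h =>
      hp.out.one_lt.ne' (Nat.dvd_one.mp ((Nat.dvd_add_right (dvd_refl p)).mp (h.trans hDp)))
    simpa [ZMod.natCast_eq_zero_iff] using hpD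
  obtain ⟨t, ht⟩ :=
    (legendreSym.eq_one_iff p hD0).mp (by rwa [jacobiSym.legendreSym.to_jacobiSym])
  refine ⟨t.val, (ZMod.intCast_zmod_eq_zero_iff_dvd _ _).mp ?_⟩
  push_cast at ht ⊢
  rw [ZMod.natCast_zmod_val, sq, ← ht]
  ring

theorem ternaryPosDef_of_sq_add_eq_mul {p b c m D : ℤ} (hp : 0 < p) (hD : 0 < D)
    (hbc : b ^ 2 + D = p * c) (hpD : p + 1 = 2 * m * D) : TernaryPosDef p c (2 * m) b 0 1 := by
  intro x y z hxyz
  have key : D * p * ternaryForm p c (2 * m) b 0 1 x y z =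
      D * (p * x + b * y) ^ 2 + (D * y + p * z) ^ 2 + p * z ^ 2 := by
    unfold ternaryForm
    linear_combination (-D * y ^ 2) * hbc - p * z ^ 2 * hpD
  by_contra! hF
  have h0 : D * p * ternaryForm p c (2 * m) b 0 1 x y z ≤ 0 :=
    mul_nonpos_of_nonneg_of_nonpos (by positivity) hF
  have hz : z ^ 2 = 0 := by
    nlinarith [sq_nonneg z, sq_nonneg (D * y + p * z), sq_nonneg (p * x + b * y)]
  simp only [pow_eq_zero_iff two_ne_zero] at hz
  subst hz
  have hy : (D * y) ^ 2 = 0 := by nlinarith [sq_nonneg (D * y), sq_nonneg (p * x + b * y)]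
  simp only [pow_eq_zero_iff two_ne_zero, mul_eq_zero, hD.ne', false_or] at hy
  subst hy
  have hx : (p * x) ^ 2 = 0 := by nlinarith [sq_nonneg (p * x)]
  simp only [pow_eq_zero_iff two_ne_zero, mul_eq_zero, hp.ne', false_or] at hx
  simp [hx] at hxyz

theorem exists_two_mul_eq_sum_three_sq {m : ℕ} (hm : m % 4 = 3) :
    ∃ x y z : ℤ, 2 * (m : ℤ) = x ^ 2 + y ^ 2 + z ^ 2 := by
  obtain ⟨p, k, hp, hpk⟩ := exists_prime_add_one_eq hm
  have : Fact p.Prime := ⟨hp⟩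
  have hp4 : p % 4 = 1 := by
    rw [show 2 * m * (4 * k + 1) = 8 * (m * k) + 2 * m by ring] at hpk
    omega
  obtain ⟨b, c, hbc⟩ :=
    exists_dvd_sq_add hp4 (show (4 * k + 1) % 4 = 1 by omega) ⟨2 * m, by rw [hpk]; ring⟩
  have hpk' : (p : ℤ) + 1 = 2 * m * (4 * k + 1) := by exact_mod_cast hpk
  push_cast at hbc
  have hdet : ternaryDet p c (2 * m) b 0 1 = 1 := by
    unfold ternaryDet
    linear_combination (-2 * m) * hbc - hpk'
  have hpos : TernaryPosDef p c (2 * m) b 0 1 :=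
    ternaryPosDef_of_sq_add_eq_mul (by exact_mod_cast hp.pos) (by positivity) hbc hpk'
  obtain ⟨u, v, w, h⟩ := ternaryForm_eq_sum_three_sq hpos hdet 0 0 1
  exact ⟨u, v, w, by rw [← h]; unfold ternaryForm; ring⟩

theorem sq_mod_eight (a : ℕ) : a ^ 2 % 8 = 0 ∨ a ^ 2 % 8 = 1 ∨ a ^ 2 % 8 = 4 := by
  rw [Nat.pow_mod]
  have := Nat.mod_lt a (show 8 > 0 by norm_num)
  interval_cases a % 8 <;> simp

theorem stmt_3 (N : ℕ) :
    ∃ A B C : ℕ, N = A ^ 2 / 8 + B ^ 2 / 8 + C ^ 2 / 8 := by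
  obtain ⟨x, y, z, h⟩ := exists_two_mul_eq_sum_three_sq (m := 4 * N + 3) (by omega)
  refine ⟨x.natAbs, y.natAbs, z.natAbs, ?_⟩
  have hsum : x.natAbs ^ 2 + y.natAbs ^ 2 + z.natAbs ^ 2 = 8 * N + 6 := by
    zify
    simp only [sq_abs]
    push_cast at h
    linarith
  have := sq_mod_eight x.natAbs
  have := sq_mod_eight y.natAbs
  have := sq_mod_eight z.natAbs
  omega
end

section
/- Every natural number N can be written as the sum of three terms of the sequence (⌊n²/9⌋)_{n∈ℕ}, i.e., there exist natural numbers A, B, C with N = ⌊A²/9⌋ + ⌊B²/9⌋ + ⌊C²/9⌋. -/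
/-!
Squares are `0, 1, 4, 7` modulo `9`, so a representation `9N + s = a² + b² + c²` with
`s ∈ {1, 7}` gives `N = ⌊a²/9⌋ + ⌊b²/9⌋ + ⌊c²/9⌋`, and `s` can be chosen with
`9N + s ≡ 1, 2 (mod 4)`. Such numbers are sums of three squares (Gauss–Legendre), by Ankeny's
argument: write `n = t²u` with `u` squarefree; Dirichlet's theorem gives a prime `q ≡ 1 (mod 4)`
with `u ∣ q + 1` and `(u/q) = 1`; a pigeonhole (Minkowski) argument solves `P² + qQ² = uR²` with
`R ≠ 0`; as `q` is a sum of two squares, `u` is a sum of three rational squares, and the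
Davenport–Cassels descent makes them integral.
-/

open scoped NumberTheorySymbols

theorem Squarefree.isUnit_of_isSquare {R : Type*} [Monoid R] {x : R} (hx : Squarefree x)
    (h : IsSquare x) : IsUnit x := by
  obtain ⟨r, rfl⟩ := h
  exact (hx r dvd_rfl).mul (hx r dvd_rfl)

theorem Nat.Prime.not_isSquare_mul {p n : ℕ} (hp : p.Prime) (hpn : ¬p ∣ n) :
    ¬IsSquare (p * n) := by
  rintro ⟨r, hr⟩
  obtain ⟨s, rfl⟩ := (Nat.Prime.dvd_mul hp).mp (hr ▸ dvd_mul_right p n) |>.elim id id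
  exact hpn ⟨s * s, Nat.eq_of_mul_eq_mul_left hp.pos (by rw [hr]; ring)⟩

theorem Nat.sqrt_sq_lt_of_not_isSquare {n : ℕ} (hn : ¬IsSquare n) : Nat.sqrt n ^ 2 < n :=
  (Nat.sqrt_le' n).lt_of_ne fun h => hn ⟨Nat.sqrt n, h.symm.trans (sq _)⟩

theorem Nat.sq_sub_lt_of_lt_sqrt_add_one {n i j : ℕ} (hn : ¬IsSquare n)
    (hi : i < Nat.sqrt n + 1) (hj : j < Nat.sqrt n + 1) : ((i : ℤ) - j) ^ 2 < n := by
  have hsub : |(i : ℤ) - j| ≤ Nat.sqrt n := abs_le.mpr ⟨by omega, by omega⟩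
  calc ((i : ℤ) - j) ^ 2 = |(i : ℤ) - j| ^ 2 := (sq_abs _).symm
    _ ≤ (Nat.sqrt n : ℤ) ^ 2 := pow_le_pow_left₀ (abs_nonneg _) hsub 2
    _ < n := by exact_mod_cast Nat.sqrt_sq_lt_of_not_isSquare hn

theorem Int.exists_eq_mul_add_four_mul_sq_le (x : ℤ) {d : ℕ} (hd : 0 < d) :
    ∃ y r : ℤ, x = d * y + r ∧ 4 * r ^ 2 ≤ d ^ 2 := by
  refine ⟨x.bdiv d, x.bmod d, (Int.bdiv_add_bmod x d).symm, ?_⟩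
  have h₁ := Int.le_bmod (x := x) hd
  have h₂ := Int.bmod_le (x := x) hd
  have h₃ : |2 * x.bmod d| ≤ d := abs_le.mpr ⟨by omega, by omega⟩
  nlinarith [sq_abs (2 * x.bmod d), abs_nonneg (2 * x.bmod d)]

def IsSumOfThreeSquares (n : ℤ) : Prop :=
  ∃ a b c : ℤ, a ^ 2 + b ^ 2 + c ^ 2 = n

namespace IsSumOfThreeSquares

theorem mul_sq {n : ℤ} (h : IsSumOfThreeSquares n) (t : ℤ) :
    IsSumOfThreeSquares (t ^ 2 * n) := by
  obtain ⟨a, b, c, rfl⟩ := h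
  exact ⟨t * a, t * b, t * c, by ring⟩

theorem exists_nat {n : ℕ} (h : IsSumOfThreeSquares n) :
    ∃ a b c : ℕ, a ^ 2 + b ^ 2 + c ^ 2 = n := by
  obtain ⟨a, b, c, h⟩ := h
  refine ⟨a.natAbs, b.natAbs, c.natAbs, ?_⟩
  zify
  simpa only [Int.natCast_natAbs, sq_abs] using h

/-- One step of the Aubry–Davenport–Cassels descent: rounding a rational point on the sphere
`x² + y² + z² = n` with denominator `d` to the nearest lattice point, the line through
them meets the sphere again in a point of smaller denominator. -/
theorem exists_lt_of_mul_sq {n : ℤ} {d : ℕ} (hd : 0 < d)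
    (h : IsSumOfThreeSquares (n * d ^ 2)) :
    IsSumOfThreeSquares n ∨ ∃ e : ℕ, 0 < e ∧ e < d ∧ IsSumOfThreeSquares (n * e ^ 2) := by
  obtain ⟨x, y, z, h⟩ := h
  obtain ⟨a, r, rfl, hr⟩ := Int.exists_eq_mul_add_four_mul_sq_le x hd
  obtain ⟨b, s, rfl, hs⟩ := Int.exists_eq_mul_add_four_mul_sq_le y hd
  obtain ⟨c, t, rfl, ht⟩ := Int.exists_eq_mul_add_four_mul_sq_le z hd
  set P := (d * a + r) * a + (d * b + s) * b + (d * c + t) * c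
  set Q := a ^ 2 + b ^ 2 + c ^ 2
  set e : ℤ := n * d - 2 * P + d * Q with he
  have hrst : r ^ 2 + s ^ 2 + t ^ 2 = d * e := by linear_combination h
  have hd' : (0 : ℤ) < d := by exact_mod_cast hd
  have he₀ : 0 ≤ e := by nlinarith [sq_nonneg r, sq_nonneg s, sq_nonneg t]
  have hed : e < d := by nlinarith
  rcases he₀.eq_or_lt with he₀ | he₀
  · left
    have hr₀ : r = 0 := by nlinarith [sq_nonneg r, sq_nonneg s, sq_nonneg t]
    have hs₀ : s = 0 := by nlinarith [sq_nonneg r, sq_nonneg s, sq_nonneg t]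
    have ht₀ : t = 0 := by nlinarith [sq_nonneg r, sq_nonneg s, sq_nonneg t]
    subst hr₀ hs₀ ht₀
    refine ⟨a, b, c, mul_right_cancel₀ (pow_ne_zero 2 hd'.ne') ?_⟩
    linear_combination h
  · right
    refine ⟨e.toNat, by omega, by omega, ?_⟩
    set A := Q - n
    set B := 2 * (n * d - P)
    refine ⟨A * (d * a + r) + B * a, A * (d * b + s) + B * b, A * (d * c + t) + B * c, ?_⟩
    rw [Int.toNat_of_nonneg he₀.le, he]
    linear_combination A ^ 2 * h

theorem of_mul_sq {n d : ℤ} (hd : d ≠ 0) (h : IsSumOfThreeSquares (n * d ^ 2)) :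
    IsSumOfThreeSquares n := by
  rw [← Int.natAbs_sq] at h
  obtain ⟨k, hk, h⟩ : ∃ k : ℕ, 0 < k ∧ IsSumOfThreeSquares (n * k ^ 2) :=
    ⟨d.natAbs, Int.natAbs_pos.mpr hd, h⟩
  induction k using Nat.strong_induction_on with
  | _ k ih =>
    rcases exists_lt_of_mul_sq hk h with h | ⟨e, he, hek, h⟩
    exacts [h, ih e hek he h]

end IsSumOfThreeSquares

/-- Pigeonhole in the box `[0, √(ab)] × [0, √a] × [0, √b]`, which has more than `ab` points. -/
theorem exists_small_sub_dvd_sub_mul_dvd {a b : ℕ} (β : ℤ) (ha : ¬IsSquare a)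
    (hb : ¬IsSquare b) (hab : ¬IsSquare (a * b)) :
    ∃ X Y Z : ℤ, (X ≠ 0 ∨ Y ≠ 0 ∨ Z ≠ 0) ∧ X ^ 2 < a * b ∧ Y ^ 2 < a ∧ Z ^ 2 < b ∧
      (a : ℤ) ∣ X - Y ∧ (b : ℤ) ∣ X - β * Z := by
  have : NeZero a := ⟨by rintro rfl; exact ha ⟨0, rfl⟩⟩
  have : NeZero b := ⟨by rintro rfl; exact hb ⟨0, rfl⟩⟩
  set box := Finset.range (Nat.sqrt (a * b) + 1) ×ˢ Finset.range (Nat.sqrt a + 1) ×ˢ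
    Finset.range (Nat.sqrt b + 1)
  have hcard : (Finset.univ : Finset (ZMod a × ZMod b)).card < box.card := by
    simp only [box, Finset.card_univ, Fintype.card_prod, ZMod.card, Finset.card_product,
      Finset.card_range]
    refine lt_of_pow_lt_pow_left₀ 2 (by positivity) ?_
    calc (a * b) ^ 2 = a * b * a * b := by ring
      _ < (Nat.sqrt (a * b) + 1) ^ 2 * (Nat.sqrt a + 1) ^ 2 * (Nat.sqrt b + 1) ^ 2 :=
        Nat.mul_lt_mul'' (Nat.mul_lt_mul'' (Nat.lt_succ_sqrt' _) (Nat.lt_succ_sqrt' _))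
          (Nat.lt_succ_sqrt' _)
      _ = _ := by ring
  obtain ⟨⟨i, j, k⟩, hp, ⟨i', j', k'⟩, hp', hne, heq⟩ :=
    Finset.exists_ne_map_eq_of_card_lt_of_maps_to hcard
      (f := fun p : ℕ × ℕ × ℕ => ((((p.1 : ℤ) - p.2.1 : ℤ) : ZMod a),
        (((p.1 : ℤ) - β * p.2.2 : ℤ) : ZMod b))) fun _ _ => Finset.mem_coe.mpr (Finset.mem_univ _)
  simp only [box, Finset.mem_product, Finset.mem_range] at hp hp'
  simp only [Prod.mk.injEq, ZMod.intCast_eq_intCast_iff_dvd_sub] at heq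
  refine ⟨(i : ℤ) - i', (j : ℤ) - j', (k : ℤ) - k', ?_,
    by exact_mod_cast Nat.sq_sub_lt_of_lt_sqrt_add_one hab hp.1 hp'.1,
    Nat.sq_sub_lt_of_lt_sqrt_add_one ha hp.2.1 hp'.2.1,
    Nat.sq_sub_lt_of_lt_sqrt_add_one hb hp.2.2 hp'.2.2, ?_, ?_⟩
  · by_contra! h
    exact hne (by simp only [Prod.mk.injEq]; omega)
  · obtain ⟨m, hm⟩ := heq.1
    exact ⟨-m, by linear_combination -hm⟩
  · obtain ⟨m, hm⟩ := heq.2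
    exact ⟨-m, by linear_combination -hm⟩

/-- For the small vector `(X, Y, Z)`, `X² + qY² - uZ²` is divisible by `uq` and lies strictly
between `-uq` and `2uq`; the value `uq` is moved to `0` by an explicit rational change of
variables. -/
theorem exists_sq_add_mul_sq_eq_mul_sq {u q : ℕ} {β : ℤ} (hq : q.Prime) (hu : ¬IsSquare u)
    (huq : u < q) (hdvd : u ∣ q + 1) (hβ : (q : ℤ) ∣ β ^ 2 - u) :
    ∃ P Q R : ℤ, R ≠ 0 ∧ P ^ 2 + q * Q ^ 2 = u * R ^ 2 := by
  have hu₀ : 0 < u := Nat.pos_of_ne_zero (by rintro rfl; exact hu ⟨0, rfl⟩)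
  have hqu : ¬q ∣ u := Nat.not_dvd_of_pos_of_lt hu₀ huq
  obtain ⟨X, Y, Z, hXYZ, hX, hY, hZ, hXY, hXZ⟩ := exists_small_sub_dvd_sub_mul_dvd β hu
    (Prime.not_isSquare hq.prime) (by rw [mul_comm]; exact hq.not_isSquare_mul hqu)
  have hdvd_u : (u : ℤ) ∣ X ^ 2 + q * Y ^ 2 - u * Z ^ 2 := by
    obtain ⟨k, hk⟩ := hXY
    obtain ⟨l, hl⟩ : (u : ℤ) ∣ q + 1 := by exact_mod_cast hdvd
    exact ⟨k * (X + Y) + l * Y ^ 2 - Z ^ 2, by linear_combination (X + Y) * hk + Y ^ 2 * hl⟩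
  have hdvd_q : (q : ℤ) ∣ X ^ 2 + q * Y ^ 2 - u * Z ^ 2 := by
    obtain ⟨k, hk⟩ := hXZ
    obtain ⟨l, hl⟩ := hβ
    exact ⟨k * (X + β * Z) + l * Z ^ 2 + Y ^ 2,
      by linear_combination (X + β * Z) * hk + Z ^ 2 * hl⟩
  have hcop : IsCoprime (u : ℤ) q :=
    Nat.isCoprime_iff_coprime.mpr ((Nat.Prime.coprime_iff_not_dvd hq).mpr hqu).symm
  obtain ⟨k, hk⟩ := hcop.mul_dvd hdvd_u hdvd_q
  have hq₀ : (0 : ℤ) < q := by exact_mod_cast hq.pos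
  have hu₀' : (0 : ℤ) < u := by exact_mod_cast hu₀
  have hk : k = 0 ∨ k = 1 := by
    have : -1 < k := by nlinarith [sq_nonneg X, sq_nonneg Y, mul_pos hu₀' hq₀]
    have : k < 2 := by nlinarith [sq_nonneg Z, mul_pos hu₀' hq₀]
    omega
  rcases hk with rfl | rfl
  · refine ⟨X, Y, Z, ?_, by linear_combination hk⟩
    rintro rfl
    have hX₀ : X = 0 := by nlinarith [sq_nonneg X, sq_nonneg Y]
    have hY₀ : Y = 0 := by nlinarith [sq_nonneg X, sq_nonneg Y]
    simp [hX₀, hY₀] at hXYZ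
  · exact ⟨X * Z + q * Y, Y * Z - X, Z ^ 2 + q, by positivity,
      by linear_combination (Z ^ 2 + q) * hk⟩

theorem exists_residue_jacobiSym_eq_one {u : ℕ} (hu : u % 4 = 1 ∨ u % 4 = 2) :
    ∃ r : ℕ, r % 4 = 1 ∧ u ∣ r + 1 ∧ J(u | r) = 1 ∧ r.Coprime (4 * u) := by
  obtain ⟨m, rfl | rfl⟩ : ∃ m, u = 4 * m + 1 ∨ u = 4 * m + 2 := ⟨u / 4, by omega⟩
  · refine ⟨8 * m + 1, by omega, ⟨2, by ring⟩, ?_,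
      Nat.coprime_of_mul_modEq_one (8 * m + 1) ?_⟩
    · have hodd : Odd (4 * m + 1) := ⟨2 * m, by ring⟩
      rw [jacobiSym.quadratic_reciprocity_one_mod_four' hodd (by omega),
        jacobiSym.mod_left' (a₂ := -1), jacobiSym.at_neg_one hodd,
        ZMod.χ₄_nat_one_mod_four (by omega)]
      push_cast
      rw [show (8 * m + 1 : ℤ) = -1 + (4 * m + 1) * 2 by ring, Int.add_mul_emod_self_left]
    · rw [Nat.ModEq, show (8 * m + 1) * (8 * m + 1) = 1 + 4 * (4 * m + 1) * (4 * m) by ring,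
        Nat.add_mul_mod_self_left]
  · refine ⟨4 * m + 1, by omega, ⟨1, by ring⟩, ?_,
      Nat.coprime_of_mul_modEq_one (4 * m + 1) ?_⟩
    · rw [jacobiSym.mod_left' (a₂ := 1), jacobiSym.one_left]
      push_cast
      rw [show (4 * m + 2 : ℤ) = 1 + (4 * m + 1) * 1 by ring, Int.add_mul_emod_self_left]
    · rw [Nat.ModEq, show (4 * m + 1) * (4 * m + 1) = 1 + 4 * (4 * m + 2) * m by ring,
        Nat.add_mul_mod_self_left]

theorem exists_prime_jacobiSym_eq_one {u : ℕ} (hu : u % 4 = 1 ∨ u % 4 = 2) (n : ℕ) :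
    ∃ q > n, q.Prime ∧ q % 4 = 1 ∧ u ∣ q + 1 ∧ J(u | q) = 1 := by
  obtain ⟨r, hr4, hru, hrJ, hrcop⟩ := exists_residue_jacobiSym_eq_one hu
  obtain ⟨q, hqn, hq, hqr⟩ := Nat.forall_exists_prime_gt_and_modEq n (by omega) hrcop
  have hq4 : q % 4 = 1 := by rw [← hr4]; exact hqr.of_mul_right u
  refine ⟨q, hqn, hq, hq4, ((hqr.add_right 1).dvd_iff (dvd_mul_left u 4)).mpr hru, ?_⟩
  rw [jacobiSym.mod_right' u (Nat.odd_iff.mpr (by omega)), hqr,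
    ← jacobiSym.mod_right' u (Nat.odd_iff.mpr (by omega)), hrJ]

theorem IsSumOfThreeSquares.of_squarefree {u : ℕ} (hsf : Squarefree u)
    (hu : u % 4 = 1 ∨ u % 4 = 2) : IsSumOfThreeSquares u := by
  rcases eq_or_ne u 1 with rfl | hu₁
  · exact ⟨1, 0, 0, by norm_num⟩
  have hsq : ¬IsSquare u := fun h => hu₁ (Nat.isUnit_iff.mp (hsf.isUnit_of_isSquare h))
  obtain ⟨q, huq, hq, hq4, hdvd, hJ⟩ := exists_prime_jacobiSym_eq_one hu u
  have := Fact.mk hq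
  obtain ⟨b, hb⟩ := ZMod.isSquare_of_jacobiSym_eq_one hJ
  rw [Int.cast_natCast] at hb
  have hβ : (q : ℤ) ∣ (b.val : ℤ) ^ 2 - u := by
    rw [← ZMod.intCast_eq_intCast_iff_dvd_sub]
    push_cast
    rw [hb, ZMod.natCast_zmod_val, sq]
  obtain ⟨P, Q, R, hR, hPQR⟩ := exists_sq_add_mul_sq_eq_mul_sq hq hsq huq hdvd hβ
  obtain ⟨s, t, hst⟩ := Nat.Prime.sq_add_sq (p := q) (by omega)
  refine of_mul_sq hR ⟨P, s * Q, t * Q, ?_⟩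
  rw [← hPQR, ← hst]
  push_cast
  ring

theorem IsSumOfThreeSquares.of_mod_four {n : ℕ} (hn : n % 4 = 1 ∨ n % 4 = 2) :
    IsSumOfThreeSquares n := by
  obtain ⟨u, t, rfl, hsf⟩ := Nat.sq_mul_squarefree n
  have ht : t ^ 2 % 4 = 1 := by
    rcases Nat.even_or_odd t with ⟨k, rfl⟩ | ⟨k, rfl⟩
    · rw [Nat.mul_mod, show (k + k) ^ 2 = 4 * k ^ 2 by ring] at hn
      simp at hn
    · rw [show (2 * k + 1) ^ 2 = 4 * (k ^ 2 + k) + 1 by ring]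
      omega
  have hu : u % 4 = 1 ∨ u % 4 = 2 := by rwa [Nat.mul_mod, ht, one_mul, Nat.mod_mod] at hn
  push_cast
  exact (of_squarefree hsf hu).mul_sq t

theorem Nat.sq_mod_nine (a : ℕ) :
    a ^ 2 % 9 = 0 ∨ a ^ 2 % 9 = 1 ∨ a ^ 2 % 9 = 4 ∨ a ^ 2 % 9 = 7 := by
  have := Nat.mod_lt a (by norm_num : 9 > 0)
  interval_cases h : a % 9 <;> simp [Nat.pow_mod, h]

/-- Three of the residues `0, 1, 4, 7` never add up to `s + 9` or `s + 18`. -/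
theorem Nat.eq_sq_div_nine_add_sq_div_nine_add_sq_div_nine {N s a b c : ℕ} (hs : s = 1 ∨ s = 7)
    (h : a ^ 2 + b ^ 2 + c ^ 2 = 9 * N + s) : N = a ^ 2 / 9 + b ^ 2 / 9 + c ^ 2 / 9 := by
  have := Nat.sq_mod_nine a
  have := Nat.sq_mod_nine b
  have := Nat.sq_mod_nine c
  omega

theorem stmt_4 (N : ℕ) :
    ∃ A B C : ℕ, N = A ^ 2 / 9 + B ^ 2 / 9 + C ^ 2 / 9 := by
  obtain ⟨s, hs, hs4⟩ : ∃ s, (s = 1 ∨ s = 7) ∧ ((9 * N + s) % 4 = 1 ∨ (9 * N + s) % 4 = 2) := by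
    rcases Nat.lt_or_ge (N % 4) 2 with h | h
    exacts [⟨1, by omega⟩, ⟨7, by omega⟩]
  obtain ⟨a, b, c, h⟩ := (IsSumOfThreeSquares.of_mod_four hs4).exists_nat
  exact ⟨a, b, c, Nat.eq_sq_div_nine_add_sq_div_nine_add_sq_div_nine hs h⟩
end

section
/- For every natural number k, there exists r ∈ {4, 6} such that 7k + r is not of the form 4^s(8t + 7) for any natural numbers s, t. -/
lemma rep_mod8 (s t : ℕ) :
    4 ^ s * (8 * t + 7) % 8 = 0 ∨ 4 ^ s * (8 * t + 7) % 8 = 4 ∨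
      4 ^ s * (8 * t + 7) % 8 = 7 := by
  match s with
  | 0 => right; right; omega
  | 1 => right; left; simp [pow_one]; omega
  | s + 2 =>
    left
    have h : 4 ^ (s + 2) * (8 * t + 7) = 8 * (2 * 4 ^ s * (8 * t + 7)) := by ring
    rw [h]
    simp [Nat.mul_mod_right]

theorem stmt_13 (k : ℕ) :
    ∃ r ∈ ({4, 6} : Set ℕ), ∀ s t : ℕ, 7 * k + r ≠ 4 ^ s * (8 * t + 7) := by
  by_cases h : k % 8 = 0 ∨ k % 8 = 4 ∨ k % 8 = 5
  · refine ⟨6, by simp, fun s t heq => ?_⟩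
    have := rep_mod8 s t
    omega
  · refine ⟨4, by simp, fun s t heq => ?_⟩
    have := rep_mod8 s t
    push_neg at h
    omega
end

section
/- For every natural number k, there exists r ∈ {1, 4, 7, 8} such that 9k + r is not of the form 4^s(8t + 7) for any natural numbers s, t. -/
theorem stmt_15 (k : ℕ) :
    ∃ r ∈ ({1, 4, 7, 8} : Set ℕ), ∀ s t : ℕ, 9 * k + r ≠ 4 ^ s * (8 * t + 7) := by
  have key : ∀ n : ℕ, n % 8 ≠ 7 → ¬ 4 ∣ n → ∀ s t : ℕ, n ≠ 4 ^ s * (8 * t + 7) := by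
    intro n h7 h4 s t h
    cases s with
    | zero => simp at h; omega
    | succ s => exact h4 ⟨4 ^ s * (8 * t + 7), by rw [h]; ring⟩
  by_cases h3 : k % 8 = 3
  · exact ⟨7, by norm_num, key _ (by omega) (by omega)⟩
  by_cases h6 : k % 8 = 6
  · exact ⟨4, by norm_num, key _ (by omega) (by omega)⟩
  by_cases h7 : k % 8 = 7
  · exact ⟨4, by norm_num, key _ (by omega) (by omega)⟩
  · exact ⟨1, by norm_num, key _ (by omega) (by omega)⟩
end
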